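/- arXiv:0710.5729 — 9 statements merged into one kernel-verified Lean document; each statement's English description precedes it below -/
import Mathlib

section
/- Let V be a finite-dimensional complex vector space, A ⊂ V* a finite set with nondegenerate canonical form G_A, and for a 2-plane π ⊂ V* let Π = π ∩ A. Suppose for α ∈ Π and all a, b ∈ V the identity Σ_{β∈Π} β(α^∨)(α(a)β(b) − α(b)β(a)) = 0 holds. Then there exists a constant λ such that G_Π(α^∨, a) = λ·α(a) for all a ∈ V, where G_Π(x,y) = Σ_{β∈Π} β(x)β(y). -/
open scoped Classical

/-- If for `α ∈ Π = π ∩ A` the identity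
`∑ β ∈ Π, β(α^∨)(α(a)β(b) − α(b)β(a)) = 0` holds for all `a, b ∈ V`, then there is a constant
`λ` with `G_Π(α^∨, a) = λ·α(a)` for all `a ∈ V`. Here `α^∨ = φ_A⁻¹(α)` for the isomorphism
`φ_A : V ≃ V*` induced by the nondegenerate canonical form `G_A`. -/
theorem vee_condition_from_identity
    {V : Type*} [AddCommGroup V] [Module ℂ V] [FiniteDimensional ℂ V]
    (A : Finset (Module.Dual ℂ V))
    (φ : V ≃ₗ[ℂ] Module.Dual ℂ V)
    (hφ : ∀ x y, φ x y = ∑ α ∈ A, α x * α y)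
    (π : Submodule ℂ (Module.Dual ℂ V)) (hπ : Module.finrank ℂ π = 2)
    (α : Module.Dual ℂ V) (hα : α ∈ A) (hαπ : α ∈ π)
    (hid : ∀ a b : V,
      ∑ β ∈ A.filter (· ∈ π), β (φ.symm α) * (α a * β b - α b * β a) = 0) :
    ∃ lam : ℂ, ∀ a : V,
      ∑ β ∈ A.filter (· ∈ π), β (φ.symm α) * β a = lam * α a := by
  set S : V → ℂ := fun x => ∑ β ∈ A.filter (· ∈ π), β (φ.symm α) * β x with hS
  have key : ∀ a b : V, α a * S b - α b * S a = 0 := by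
    intro a b
    rw [← hid a b, hS]
    simp only [Finset.mul_sum, ← Finset.sum_sub_distrib]
    exact Finset.sum_congr rfl fun β _ => by ring
  by_cases hz : α = 0
  · refine ⟨0, fun a => ?_⟩
    simp [hS, hz]
  · obtain ⟨a₀, ha₀⟩ := DFunLike.ne_iff.mp hz
    refine ⟨S a₀ / α a₀, fun a => ?_⟩
    have ha₀' : α a₀ ≠ 0 := by simpa using ha₀
    have h := key a a₀
    show S a = S a₀ / α a₀ * α a
    rw [div_mul_eq_mul_div, eq_div_iff ha₀']
    linear_combination -h
end

section
/- Let V be a finite-dimensional complex vector space, A ⊂ V* finite with nondegenerate canonical form G_A, and B = A ∩ W for a subspace W ⊆ V* spanned by B. Define A_W = Σ_{β∈B} β ⊗ β^∨ as an operator on W^∨ = φ_A^{-1}(W). If every vector β^∨ (β ∈ B) is an eigenvector of A_W, then W^∨ decomposes as an orthogonal (with respect to G_A) direct sum U_1 ⊕ ... ⊕ U_k of eigenspaces, and for each i the restriction of G_B to U_i × V equals λ_i times the restriction of G_A to U_i × V, where λ_i is the corresponding eigenvalue. -/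
open scoped Classical

/-- Let `B = A ∩ W` for a subspace `W ⊆ V*` spanned by `B`, and let
`A_W = ∑ β ∈ B, β ⊗ β^∨` act on `W^∨ = φ_A⁻¹(W)`.  If every `β^∨` (`β ∈ B`) is an
eigenvector of `A_W`, then `W^∨` is a direct sum `U_1 ⊕ ⋯ ⊕ U_k` of eigenspaces of `A_W`,
pairwise orthogonal with respect to `G_A`, and on each `U_i × V` the form `G_B` equals
`λ_i` times `G_A`, where `λ_i` is the corresponding eigenvalue. -/
theorem subsystem_eigenspace_decomposition
    {V : Type*} [AddCommGroup V] [Module ℂ V] [FiniteDimensional ℂ V]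
    (A : Finset (Module.Dual ℂ V))
    (φ : V ≃ₗ[ℂ] Module.Dual ℂ V)
    (hφ : ∀ x y, φ x y = ∑ α ∈ A, α x * α y)
    (W : Submodule ℂ (Module.Dual ℂ V))
    (B : Finset (Module.Dual ℂ V)) (hB : B = A.filter (· ∈ W))
    (hspan : Submodule.span ℂ (B : Set (Module.Dual ℂ V)) = W)
    (heig : ∀ β ∈ B, ∃ μ : ℂ,
      ∑ γ ∈ B, γ (φ.symm β) • φ.symm γ = μ • φ.symm β) :
    ∃ (k : ℕ) (U : Fin k → Submodule ℂ V) (lam : Fin k → ℂ),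
      (∀ i, U i ≤ Submodule.comap (φ : V →ₗ[ℂ] Module.Dual ℂ V) W) ∧
      iSupIndep U ∧
      (⨆ i, U i) = Submodule.comap (φ : V →ₗ[ℂ] Module.Dual ℂ V) W ∧
      (∀ i, ∀ u ∈ U i, ∑ γ ∈ B, γ u • φ.symm γ = lam i • u) ∧
      (∀ i j, i ≠ j → ∀ u ∈ U i, ∀ v ∈ U j, ∑ α ∈ A, α u * α v = 0) ∧
      (∀ i, ∀ u ∈ U i, ∀ v : V,
        ∑ β ∈ B, β u * β v = lam i * ∑ α ∈ A, α u * α v) := by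
  -- The operator T u = ∑ γ ∈ B, γ u • φ.symm γ
  set T : V →ₗ[ℂ] V := ∑ γ ∈ B, LinearMap.smulRight γ (φ.symm γ) with hT
  have hTapp : ∀ u : V, T u = ∑ γ ∈ B, γ u • φ.symm γ := by
    intro u
    simp [hT, LinearMap.sum_apply]
  -- W^∨
  set Wd : Submodule ℂ V := Submodule.comap (φ : V →ₗ[ℂ] Module.Dual ℂ V) W with hWd
  -- chosen eigenvalues
  have hmu : ∀ β ∈ B, T (φ.symm β) = (if h : β ∈ B then Classical.choose (heig β h) else 0) • φ.symm β := by
    intro β hβ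
    rw [hTapp, dif_pos hβ]
    exact Classical.choose_spec (heig β hβ)
  set f : Module.Dual ℂ V → ℂ := fun β => if h : β ∈ B then Classical.choose (heig β h) else 0 with hf
  set S : Finset ℂ := B.image f with hS
  set e : Fin S.card ≃ S := S.equivFin.symm with he
  refine ⟨S.card, fun i => Module.End.eigenspace T (e i : ℂ) ⊓ Wd,
    fun i => (e i : ℂ), fun i => inf_le_right, ?_, ?_, ?_, ?_, ?_⟩
  · -- independence
    have hinj : Function.Injective (fun i : Fin S.card => (e i : ℂ)) :=
      Subtype.coe_injective.comp e.injective
    exact ((Module.End.eigenspaces_iSupIndep T).comp hinj).mono fun i => inf_le_left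
  · -- supremum = W^∨
    apply le_antisymm
    · exact iSup_le fun i => inf_le_right
    · -- W^∨ = span of φ.symm β
      have hWdspan : Wd = Submodule.span ℂ ((φ.symm : Module.Dual ℂ V →ₗ[ℂ] V) '' B) := by
        rw [hWd, Submodule.comap_equiv_eq_map_symm, ← hspan, Submodule.map_span]
      intro x hx
      rw [hWdspan] at hx
      refine Submodule.span_le.mpr ?_ hx
      rintro _ ⟨β, hβ, rfl⟩
      simp only [LinearEquiv.coe_coe]
      have hβB : β ∈ (B : Finset _) := hβ
      have hμS : f β ∈ S := Finset.mem_image_of_mem f hβB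
      have hi : ∃ i : Fin S.card, (e i : ℂ) = f β := ⟨e.symm ⟨f β, hμS⟩, by simp⟩
      obtain ⟨i, hi⟩ := hi
      refine le_iSup (fun i => Module.End.eigenspace T (e i : ℂ) ⊓ Wd) i ?_
      refine ⟨?_, ?_⟩
      · show φ.symm β ∈ Module.End.eigenspace T (e i : ℂ)
        rw [Module.End.mem_eigenspace_iff, hi]
        exact hmu β hβB
      · show φ (φ.symm β) ∈ W
        rw [LinearEquiv.apply_symm_apply]
        rw [← hspan]
        exact Submodule.subset_span hβ
  · -- eigenvector property
    intro i u hu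
    have := Module.End.mem_eigenspace_iff.mp hu.1
    rw [← hTapp]
    exact this
  · -- orthogonality
    intro i j hij u hu v hv
    -- G_B(u,v) = lam i * G_A(u,v) and G_B(v,u) = lam j * G_A(v,u)
    have key : ∀ (μ : ℂ) (x : V), T x = μ • x → ∀ y : V,
        ∑ β ∈ B, β x * β y = μ * ∑ α ∈ A, α x * α y := by
      intro μ x hx y
      have h1 : φ (T x) y = μ * φ x y := by
        rw [hx, map_smul]; simp
      have h2 : φ (T x) = ∑ γ ∈ B, γ x • γ := by
        rw [hTapp, map_sum]
        refine Finset.sum_congr rfl fun γ _ => ?_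
        rw [map_smul, LinearEquiv.apply_symm_apply]
      rw [h2] at h1
      simpa [hφ, Finset.sum_apply', smul_eq_mul] using h1
    have hu' := Module.End.mem_eigenspace_iff.mp hu.1
    have hv' := Module.End.mem_eigenspace_iff.mp hv.1
    have h1 := key _ u hu' v
    have h2 := key _ v hv' u
    have hsymB : (∑ β ∈ B, β u * β v) = ∑ β ∈ B, β v * β u :=
      Finset.sum_congr rfl fun β _ => mul_comm _ _
    have hsymA : (∑ α ∈ A, α u * α v) = ∑ α ∈ A, α v * α u :=
      Finset.sum_congr rfl fun α _ => mul_comm _ _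
    have hne : (e i : ℂ) ≠ (e j : ℂ) := fun h =>
      hij (e.injective (Subtype.coe_injective h))
    have : ((e i : ℂ) - (e j : ℂ)) * ∑ α ∈ A, α u * α v = 0 := by
      rw [sub_mul]
      rw [← h1]
      rw [hsymA, ← h2, hsymB]
      ring
    rcases mul_eq_zero.mp this with h | h
    · exact absurd (sub_eq_zero.mp h) hne
    · exact h
  · -- scaling
    intro i u hu v
    have hu' := Module.End.mem_eigenspace_iff.mp hu.1
    have h1 : φ (T u) v = (e i : ℂ) * φ u v := by
      rw [hu', map_smul]; simp
    have h2 : φ (T u) = ∑ γ ∈ B, γ u • γ := by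
      rw [hTapp, map_sum]
      refine Finset.sum_congr rfl fun γ _ => ?_
      rw [map_smul, LinearEquiv.apply_symm_apply]
    rw [h2] at h1
    simpa [hφ, Finset.sum_apply', smul_eq_mul] using h1
end

section
/- Let A ⊂ ℂⁿ be a finite collection of vectors with Σ_{α∈A} (α,u)(α,v) = 0 for all u,v, where (·,·) is a nondegenerate symmetric bilinear form. Then for any functions η^i(x), the matrix G(x) = Σ_i η^i(x) F_i(x) is degenerate for every x, where (F_i)_{jk} = ∂³F/∂x^i∂x^j∂x^k for F(x) = Σ_{α∈A} (α,x)² log(α,x); in fact x lies in the kernel of G(x). -/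
/-!
`F` is a sum of ridge functions `f ((α, x))` with `f t = t² log t`. Differentiating such a sum
in a direction `u` gives again a ridge sum, with `f` replaced by `f'` and each term weighted by
`(α, u)`; hence `F_{ijk}(x) = ∑ α, (2 / (α, x)) (α, eᵢ) (α, eⱼ) (α, eₖ)`. Contracting with `x`
cancels the factor `1 / (α, x)`, so `(G(x) x)ⱼ = 2 ∑ α, (α, η) (α, eⱼ)`, which vanishes by the
hypothesis on `A`.
-/

open Set

theorem sum_mul_map_single {ι R M : Type*} [Fintype ι] [DecidableEq ι] [CommSemiring R]
    [FunLike M (ι → R) R] [LinearMapClass M R (ι → R) R] (f : M) (x : ι → R) :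
    ∑ i, x i * f (Pi.single i 1) = f x := by
  conv_rhs => rw [← Finset.univ_sum_single x, map_sum]
  refine Finset.sum_congr rfl fun i _ => ?_
  rw [← smul_eq_mul, ← map_smul, ← Pi.single_smul', smul_eq_mul, mul_one]

section RidgeSum

variable {𝕜 ι E : Type*} [NontriviallyNormedField 𝕜] [NormedAddCommGroup E] [NormedSpace 𝕜 E]
  (s : Finset ι) (ℓ : ι → E →L[𝕜] 𝕜)

def ridgeSum (c : ι → 𝕜) (g : 𝕜 → 𝕜) (z : E) : 𝕜 :=
  ∑ i ∈ s, c i * g (ℓ i z)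

def ridgeDomain (S : Set 𝕜) : Set E :=
  {z | ∀ i ∈ s, ℓ i z ∈ S}

variable {s ℓ}

theorem isOpen_ridgeDomain {S : Set 𝕜} (hS : IsOpen S) : IsOpen (ridgeDomain s ℓ S) := by
  simp only [ridgeDomain, Set.ofPred_forall]
  exact isOpen_biInter_finset fun i _ => hS.preimage (ℓ i).continuous

theorem hasFDerivAt_ridgeSum {c : ι → 𝕜} {g g' : 𝕜 → 𝕜} {z : E}
    (hg : ∀ i ∈ s, HasDerivAt g (g' (ℓ i z)) (ℓ i z)) :
    HasFDerivAt (ridgeSum s ℓ c g) (∑ i ∈ s, (c i * g' (ℓ i z)) • ℓ i) z := by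
  refine HasFDerivAt.fun_sum fun i hi => ?_
  refine (((hg i hi).comp_hasFDerivAt z (ℓ i).hasFDerivAt).const_mul (c i)).congr_fderiv ?_
  rw [smul_smul]

theorem fderiv_ridgeSum_apply {c : ι → 𝕜} {g g' : 𝕜 → 𝕜} {z : E}
    (hg : ∀ i ∈ s, HasDerivAt g (g' (ℓ i z)) (ℓ i z)) (u : E) :
    fderiv 𝕜 (ridgeSum s ℓ c g) z u = ridgeSum s ℓ (fun i => c i * ℓ i u) g' z := by
  simp only [(hasFDerivAt_ridgeSum hg).fderiv, sum_apply, smul_apply, smul_eq_mul, ridgeSum]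
  exact Finset.sum_congr rfl fun i _ => by ring

theorem Set.EqOn.fderiv_apply_ridgeSum {S : Set 𝕜} (hS : IsOpen S) {c : ι → 𝕜} {g g' : 𝕜 → 𝕜}
    (hg : ∀ t ∈ S, HasDerivAt g (g' t) t) {f : E → 𝕜}
    (hf : EqOn f (ridgeSum s ℓ c g) (ridgeDomain s ℓ S)) (u : E) :
    EqOn (fun z => fderiv 𝕜 f z u) (ridgeSum s ℓ (fun i => c i * ℓ i u) g')
      (ridgeDomain s ℓ S) := by
  intro z hz
  show fderiv 𝕜 f z u = _
  rw [(hf.eventuallyEq_of_mem ((isOpen_ridgeDomain hS).mem_nhds hz)).fderiv_eq]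
  exact fderiv_ridgeSum_apply (fun i hi => hg _ (hz i hi)) u

theorem fderiv_fderiv_fderiv_ridgeSum_apply {S : Set 𝕜} (hS : IsOpen S) {c : ι → 𝕜}
    {g g' g'' g''' : 𝕜 → 𝕜} (hg : ∀ t ∈ S, HasDerivAt g (g' t) t)
    (hg' : ∀ t ∈ S, HasDerivAt g' (g'' t) t) (hg'' : ∀ t ∈ S, HasDerivAt g'' (g''' t) t)
    {z : E} (hz : z ∈ ridgeDomain s ℓ S) (u v w : E) :
    fderiv 𝕜 (fun y => fderiv 𝕜 (fun y' => fderiv 𝕜 (ridgeSum s ℓ c g) y' w) y v) z u =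
      ridgeSum s ℓ (fun i => c i * ℓ i w * ℓ i v * ℓ i u) g''' z := by
  have h1 := (Set.eqOn_refl (ridgeSum s ℓ c g) _).fderiv_apply_ridgeSum hS hg w
  exact ((h1.fderiv_apply_ridgeSum hS hg' v).fderiv_apply_ridgeSum hS hg'' u) hz

end RidgeSum

section

open Complex

theorem hasDerivAt_sq_mul_log {t : ℂ} (ht : t ∈ slitPlane) :
    HasDerivAt (fun t => t ^ 2 * log t) (2 * t * log t + t) t :=
  ((hasDerivAt_pow 2 t).fun_mul (hasDerivAt_log ht)).congr_deriv <| by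
    field_simp [slitPlane_ne_zero ht]
    ring

theorem hasDerivAt_two_mul_mul_log_add {t : ℂ} (ht : t ∈ slitPlane) :
    HasDerivAt (fun t => 2 * t * log t + t) (2 * log t + 3) t :=
  ((((hasDerivAt_id' t).const_mul 2).fun_mul (hasDerivAt_log ht)).fun_add
    (hasDerivAt_id' t)).congr_deriv <| by
    field_simp [slitPlane_ne_zero ht]
    ring

theorem hasDerivAt_two_mul_log_add_three {t : ℂ} (ht : t ∈ slitPlane) :
    HasDerivAt (fun t => 2 * log t + 3) (2 * t⁻¹) t :=
  ((hasDerivAt_log ht).const_mul 2).add_const 3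

end

theorem linear_combination_of_Fi_degenerate_general
    (n : ℕ) (A : Finset (Fin n → ℂ))
    (B : LinearMap.BilinForm ℂ (Fin n → ℂ))
    (hzero : ∀ u v, ∑ α ∈ A, B α u * B α v = 0)
    (F : (Fin n → ℂ) → ℂ)
    (hF : ∀ x, F x = ∑ α ∈ A, (B α x) ^ 2 * Complex.log (B α x))
    (η : (Fin n → ℂ) → Fin n → ℂ)
    (x : Fin n → ℂ) (hx : ∀ α ∈ A, B α x ∈ Complex.slitPlane)
    (Gmat : Matrix (Fin n) (Fin n) ℂ)
    (hGmat : ∀ j k, Gmat j k = ∑ i : Fin n, η x i *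
      fderiv ℂ (fun y => fderiv ℂ (fun z => fderiv ℂ F z (Pi.single k 1)) y
        (Pi.single j 1)) x (Pi.single i 1)) :
    Gmat.mulVec x = 0 ∧ (x ≠ 0 → Gmat.det = 0) := by
  set ℓ : (Fin n → ℂ) → (Fin n → ℂ) →L[ℂ] ℂ := fun α => (B α).toContinuousLinearMap
  have hF' : F = ridgeSum A ℓ 1 (fun t => t ^ 2 * Complex.log t) :=
    funext fun y => by simp [hF, ridgeSum, ℓ]
  have hG : ∀ j k, Gmat j k = ∑ α ∈ A,
      B α (Pi.single k 1) * (B α (Pi.single j 1) * B α (η x) * (2 * (B α x)⁻¹)) := by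
    intro j k
    have hxD : x ∈ ridgeDomain A ℓ Complex.slitPlane := hx
    rw [hGmat, sum_mul_map_single, hF', fderiv_fderiv_fderiv_ridgeSum_apply
      Complex.isOpen_slitPlane (fun _ => hasDerivAt_sq_mul_log)
      (fun _ => hasDerivAt_two_mul_mul_log_add) (fun _ => hasDerivAt_two_mul_log_add_three) hxD]
    simp only [ridgeSum, ℓ, LinearMap.coe_toContinuousLinearMap', Pi.one_apply, one_mul,
      mul_assoc]
  have hmul : Gmat.mulVec x = 0 := by
    funext j
    calc ∑ k, Gmat j k * x k
        = ∑ α ∈ A, (∑ k, x k * B α (Pi.single k 1)) *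
            (B α (Pi.single j 1) * B α (η x) * (2 * (B α x)⁻¹)) := by
          simp only [hG, Finset.sum_mul]
          rw [Finset.sum_comm]
          exact Finset.sum_congr rfl fun α _ => Finset.sum_congr rfl fun k _ => by ring
      _ = ∑ α ∈ A, 2 * (B α (Pi.single j 1) * B α (η x)) := by
          refine Finset.sum_congr rfl fun α hα => ?_
          rw [sum_mul_map_single]
          field_simp [Complex.slitPlane_ne_zero (hx α hα)]
      _ = 0 := by rw [← Finset.mul_sum, hzero, mul_zero]
  exact ⟨hmul, fun hx0 => Matrix.exists_mulVec_eq_zero_iff.mp ⟨x, hx0, hmul⟩⟩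

/-- If `∑ α ∈ A, (α,u)(α,v) = 0` for all `u,v`, then for any coefficient
functions `η^i(x)` the matrix `G(x) = ∑ i, η^i(x) F_i(x)` (where `(F_i)_{jk} = F_{ijk}` are
the third partial derivatives of the prepotential `F(x) = ∑ α, (α,x)² log(α,x)`) satisfies
`G(x)·x = 0`, so `x` lies in its kernel and `G(x)` is degenerate (`det G(x) = 0` when
`x ≠ 0`). -/
theorem linear_combination_of_Fi_degenerate
    (n : ℕ) (A : Finset (Fin n → ℂ))
    (B : LinearMap.BilinForm ℂ (Fin n → ℂ))
    (hBsymm : ∀ u v, B u v = B v u)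
    (hBnd : ∀ u, (∀ v, B u v = 0) → u = 0)
    (hzero : ∀ u v, ∑ α ∈ A, B α u * B α v = 0)
    (F : (Fin n → ℂ) → ℂ)
    (hF : ∀ x, F x = ∑ α ∈ A, (B α x) ^ 2 * Complex.log (B α x))
    (η : (Fin n → ℂ) → Fin n → ℂ)
    (x : Fin n → ℂ) (hx : ∀ α ∈ A, B α x ∈ Complex.slitPlane)
    (Gmat : Matrix (Fin n) (Fin n) ℂ)
    (hGmat : ∀ j k, Gmat j k = ∑ i : Fin n, η x i *
      fderiv ℂ (fun y => fderiv ℂ (fun z => fderiv ℂ F z (Pi.single k 1)) y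
        (Pi.single j 1)) x (Pi.single i 1)) :
    Gmat.mulVec x = 0 ∧ (x ≠ 0 → Gmat.det = 0) :=
  linear_combination_of_Fi_degenerate_general n A B hzero F hF η x hx Gmat hGmat
end

section
/- For n ≥ 2 and positive reals c_1,...,c_{n+1}, the canonical form of the system A_n(c) = {√(c_i c_j)(e_i − e_j) : 1 ≤ i < j ≤ n+1} ⊂ ℝ^{n+1}, namely G(x,y) = Σ_{i<j} c_i c_j (x_i − x_j)(y_i − y_j), restricted to the hyperplane Σ c_i x_i = 0, is nondegenerate. -/
lemma aux_row_split {m : ℕ} (F : Fin m → Fin m → ℝ) (hdiag : ∀ i, F i i = 0) (i : Fin m) :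
    ∑ j, F i j = ∑ j ∈ Finset.Iio i, F i j + ∑ j ∈ Finset.Ioi i, F i j := by
  have h1 : (Finset.univ : Finset (Fin m)) = Finset.Iio i ∪ Finset.Ici i := by
    ext j; simp [lt_or_ge]
  rw [h1, Finset.sum_union (by simp [Finset.disjoint_left])]
  rw [Finset.Ici_eq_cons_Ioi, Finset.sum_cons, hdiag, zero_add]

lemma aux_double (m : ℕ) (F : Fin m → Fin m → ℝ) (hsymm : ∀ i j, F i j = F j i)
    (hdiag : ∀ i, F i i = 0) :
    ∑ i, ∑ j, F i j = 2 * ∑ i, ∑ j ∈ Finset.Ioi i, F i j := by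
  have h1 : ∀ i : Fin m, ∑ j, F i j = ∑ j ∈ Finset.Iio i, F i j + ∑ j ∈ Finset.Ioi i, F i j :=
    aux_row_split F hdiag
  have h2 : ∑ i, ∑ j ∈ Finset.Iio i, F i j = ∑ j, ∑ i ∈ Finset.Ioi j, F i j :=
    Finset.sum_comm' (by intro i j; simp)
  have h3 : ∑ j, ∑ i ∈ Finset.Ioi j, F i j = ∑ i, ∑ j ∈ Finset.Ioi i, F i j := by
    apply Finset.sum_congr rfl; intro i _; exact Finset.sum_congr rfl fun j _ => hsymm j i
  calc ∑ i, ∑ j, F i j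
      = ∑ i, (∑ j ∈ Finset.Iio i, F i j + ∑ j ∈ Finset.Ioi i, F i j) :=
        Finset.sum_congr rfl fun i _ => h1 i
    _ = ∑ i, ∑ j ∈ Finset.Iio i, F i j + ∑ i, ∑ j ∈ Finset.Ioi i, F i j := Finset.sum_add_distrib
    _ = 2 * ∑ i, ∑ j ∈ Finset.Ioi i, F i j := by rw [h2, h3]; ring

lemma aux_expand (m : ℕ) (c x : Fin m → ℝ) :
    ∑ i, ∑ j, c i * c j * (x i - x j) * (x i - x j)
      = 2 * ((∑ i, c i) * (∑ i, c i * x i * x i) - (∑ i, c i * x i) * (∑ i, c i * x i)) := by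
  have : ∀ i j : Fin m, c i * c j * (x i - x j) * (x i - x j)
      = (c i * x i * x i) * c j + c i * (c j * x j * x j)
        - (c i * x i) * (c j * x j) - (c i * x i) * (c j * x j) := by intro i j; ring
  simp only [this, Finset.sum_sub_distrib, Finset.sum_add_distrib,
    ← Finset.sum_mul, ← Finset.mul_sum]
  ring

/-- For `n ≥ 2` and positive reals `c_1, …, c_{n+1}`, the canonical form of the
system `A_n(c) = {√(c_i c_j)(e_i − e_j) : i < j}`, namely
`G(x,y) = ∑_{i<j} c_i c_j (x_i − x_j)(y_i − y_j)`, is nondegenerate when restricted to the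
hyperplane `∑ c_i x_i = 0`. -/
theorem An_canonical_form_nondegenerate_on_hyperplane
    (n : ℕ) (hn : 2 ≤ n) (c : Fin (n + 1) → ℝ) (hc : ∀ i, 0 < c i)
    (G : (Fin (n + 1) → ℝ) → (Fin (n + 1) → ℝ) → ℝ)
    (hG : ∀ x y, G x y =
      ∑ i : Fin (n + 1), ∑ j ∈ Finset.Ioi i, c i * c j * (x i - x j) * (y i - y j)) :
    ∀ x : Fin (n + 1) → ℝ, (∑ i, c i * x i) = 0 →
      (∀ y : Fin (n + 1) → ℝ, (∑ i, c i * y i) = 0 → G x y = 0) → x = 0 := by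
  intro x hx hxy
  have hGxx : G x x = 0 := hxy x hx
  have hdouble := aux_double (n + 1) (fun i j => c i * c j * (x i - x j) * (x i - x j))
    (fun i j => by ring) (fun i => by ring)
  have hexp := aux_expand (n + 1) c x
  have hkey : (∑ i, c i) * (∑ i, c i * x i * x i) = 0 := by
    have h := hG x x
    rw [hGxx] at h
    have : (0 : ℝ) = 2 * ((∑ i, c i) * (∑ i, c i * x i * x i)
        - (∑ i, c i * x i) * (∑ i, c i * x i)) := by
      rw [← hexp, hdouble, ← h]; norm_num
    rw [hx] at this
    linarith
  have hS : 0 < ∑ i, c i := Finset.sum_pos (fun i _ => hc i) Finset.univ_nonempty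
  have hsum : (∑ i, c i * x i * x i) = 0 := by
    rcases mul_eq_zero.mp hkey with h | h
    · exact absurd h (ne_of_gt hS)
    · exact h
  have hzero : ∀ i ∈ Finset.univ, c i * x i * x i = 0 := by
    intro i _
    have := (Finset.sum_eq_zero_iff_of_nonneg (fun i _ => by
      have : c i * x i * x i = c i * (x i * x i) := by ring
      rw [this]
      exact mul_nonneg (hc i).le (mul_self_nonneg _))).mp hsum
    exact this i (Finset.mem_univ i)
  funext i
  have := hzero i (Finset.mem_univ i)
  have hxi : x i * x i = 0 := by
    have hne := (hc i).ne'
    have : c i * (x i * x i) = 0 := by linarith [this]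
    exact (mul_eq_zero.mp this).resolve_left hne
  simpa using mul_self_eq_zero.mp hxi
end

section
/- For the family G_3(t) of covectors in ℂ³, the canonical form G_t(x,y) = Σ_{α∈G_3(t)} α(x)α(y) is degenerate if and only if t = −1/2 (for t ≠ 0). -/
open Matrix

/-- For the family `G_3(t)` of covectors in `ℂ³` (with fixed complex square
roots `a, b, c` of `2t+1`, `(2t−1)/3`, `3/t`), the canonical form
`G_t(x,y) = ∑_{α ∈ G_3(t)} α(x)α(y)` is degenerate if and only if `t = −1/2` (for `t ≠ 0`). -/
theorem G3t_canonical_form_degenerate_iff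
    (t : ℂ) (ht : t ≠ 0)
    (a b c : ℂ) (ha : a ^ 2 = 2 * t + 1) (hb : b ^ 2 = (2 * t - 1) / 3)
    (hc : c ^ 2 = 3 / t)
    (L : List (Fin 3 → ℂ))
    (hL : L = [a • ![1, 0, 0], a • ![0, 1, 0], a • ![1, 1, 0],
      b • ![1, -1, 0], b • ![2, 1, 0], b • ![1, 2, 0],
      c • ![0, 0, 1],
      ![1, 0, 1], ![1, 0, -1], ![0, 1, 1], ![0, 1, -1], ![1, 1, 1], ![1, 1, -1]])
    (G : (Fin 3 → ℂ) → (Fin 3 → ℂ) → ℂ)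
    (hG : ∀ x y, G x y = (L.map fun α => (α ⬝ᵥ x) * (α ⬝ᵥ y)).sum) :
    (∃ x : Fin 3 → ℂ, x ≠ 0 ∧ ∀ y, G x y = 0) ↔ t = -1/2 := by
  have hc' : c ^ 2 * t = 3 := by field_simp at hc; linear_combination hc
  subst hL
  constructor
  · rintro ⟨x, hx, h⟩
    by_contra hne
    have h2t : (2 * t + 1) ≠ 0 := by
      intro h'; apply hne; linear_combination h' / 2
    have h1 := h ![1, 0, 0]
    have h2 := h ![0, 1, 0]
    have h3 := h ![0, 0, 1]
    rw [hG] at h1 h2 h3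
    simp [dotProduct, Fin.sum_univ_three] at h1 h2 h3
    ring_nf at h1 h2 h3
    have e1 : 2 * x 0 + x 1 = 0 := by
      rcases mul_eq_zero.mp (show (2 * t + 1) * (2 * x 0 + x 1) = 0 by
        linear_combination h1 / 2 - (x 0 + x 1 / 2) * ha - (3 * x 0 + 3 * x 1 / 2) * hb) with h' | h'
      · exact absurd h' h2t
      · exact h'
    have e2 : x 0 + 2 * x 1 = 0 := by
      rcases mul_eq_zero.mp (show (2 * t + 1) * (x 0 + 2 * x 1) = 0 by
        linear_combination h2 / 2 - (x 0 / 2 + x 1) * ha - (3 * x 0 / 2 + 3 * x 1) * hb) with h' | h'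
      · exact absurd h' h2t
      · exact h'
    have e3 : x 2 = 0 := by
      rcases mul_eq_zero.mp (show (2 * t + 1) * x 2 = 0 by
        linear_combination (t / 3) * h3 - (x 2 / 3) * hc') with h' | h'
      · exact absurd h' h2t
      · exact h'
    apply hx
    funext i
    fin_cases i
    · show x 0 = 0; linear_combination (2 * e1 - e2) / 3
    · show x 1 = 0; linear_combination (2 * e2 - e1) / 3
    · exact e3
  · intro hteq
    subst hteq
    refine ⟨![1, 0, 0], ?_, ?_⟩
    · intro h'
      have := congrFun h' 0
      simp at this
    · intro y
      rw [hG]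
      simp [dotProduct, Fin.sum_univ_three]
      ring_nf
      linear_combination (2 * y 0 + y 1) * ha + (6 * y 0 + 3 * y 1) * hb
end

section
/- For the family D_3(t,s) of covectors in ℂ³ consisting of e_1 ± e_2 ± e_3 (4 covectors), √(2(−1+t+s)) e_1, √(2(s−t+1)/t) e_2, √(2(t−s+1)/s) e_3, the canonical form G(x,y) = Σ_α α(x)α(y) is degenerate if and only if t + s + 1 = 0 (for t, s ≠ 0). -/
open Matrix

/-- For the family `D_3(t,s)` of covectors in `ℂ³`, consisting of
`e₁ ± e₂ ± e₃` together with `√(2(−1+t+s)) e₁`, `√(2(s−t+1)/t) e₂`, `√(2(t−s+1)/s) e₃`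
(with fixed complex square roots `p, q, r`), the canonical form
`G(x,y) = ∑_α α(x)α(y)` is degenerate if and only if `t + s + 1 = 0` (for `t, s ≠ 0`). -/
theorem D3ts_canonical_form_degenerate_iff
    (t s : ℂ) (ht : t ≠ 0) (hs : s ≠ 0)
    (p q r : ℂ) (hp : p ^ 2 = 2 * (-1 + t + s)) (hq : q ^ 2 = 2 * (s - t + 1) / t)
    (hr : r ^ 2 = 2 * (t - s + 1) / s)
    (L : List (Fin 3 → ℂ))
    (hL : L = [![1, 1, 1], ![1, 1, -1], ![1, -1, 1], ![1, -1, -1],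
      p • ![1, 0, 0], q • ![0, 1, 0], r • ![0, 0, 1]])
    (G : (Fin 3 → ℂ) → (Fin 3 → ℂ) → ℂ)
    (hG : ∀ x y, G x y = (L.map fun α => (α ⬝ᵥ x) * (α ⬝ᵥ y)).sum) :
    (∃ x : Fin 3 → ℂ, x ≠ 0 ∧ ∀ y, G x y = 0) ↔ t + s + 1 = 0 := by
  have hq' : t * q ^ 2 = 2 * (s - t + 1) := by
    rw [hq]; field_simp
  have hr' : s * r ^ 2 = 2 * (t - s + 1) := by
    rw [hr]; field_simp
  have key : ∀ x y : Fin 3 → ℂ, t * s * G x y =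
      2 * (t + s + 1) * (t * s * (x 0 * y 0) + s * (x 1 * y 1) + t * (x 2 * y 2)) := by
    intro x y
    rw [hG, hL]
    simp only [List.map_cons, List.map_nil, List.sum_cons, List.sum_nil, dotProduct,
      Fin.sum_univ_three, Matrix.cons_val_zero, Matrix.cons_val_one, Matrix.head_cons,
      Matrix.cons_val_two, Matrix.tail_cons, Pi.smul_apply, smul_eq_mul]
    linear_combination (s * t * (x 0 * y 0)) * hp + (s * (x 1 * y 1)) * hq' +
      (t * (x 2 * y 2)) * hr'
  constructor
  · rintro ⟨x, hx, h0⟩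
    by_contra hts
    apply hx
    funext i
    fin_cases i
    · have := key x ![1, 0, 0]
      rw [h0] at this
      simp at this
      rcases this with h | (h | h) | h
      · exact absurd h hts
      · exact absurd h ht
      · exact absurd h hs
      · exact h
    · have := key x ![0, 1, 0]
      rw [h0] at this
      simp at this
      rcases this with h | h | h
      · exact absurd h hts
      · exact absurd h hs
      · exact h
    · have := key x ![0, 0, 1]
      rw [h0] at this
      simp at this
      rcases this with h | h | h
      · exact absurd h hts
      · exact absurd h ht
      · exact h
  · intro hts
    refine ⟨![1, 0, 0], ?_, ?_⟩
    · intro h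
      have := congrFun h 0
      simp at this
    · intro y
      have := key ![1, 0, 0] y
      rw [hts] at this
      simp at this
      rcases this with (h | h) | h
      · exact absurd h ht
      · exact absurd h hs
      · exact h
end

section
/- Let V be a finite-dimensional complex vector space, A ⊂ V* finite with nondegenerate canonical form G_A, and suppose A is a V-system. Let B = A ∩ W for a subspace W ⊆ V* spanned by B, and suppose G_B restricted to W^∨ is nondegenerate. Then B is a V-system in W (with duals taken with respect to G_B restricted to W^∨). -/
/-!
The planes of `W` through a fixed `γ ∈ B` cover `B` outside the line `ℂ γ`, and two of them meet
only in that line; summing the `∨`-condition of `A` over these planes shows that `γ^∨` is an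
eigenvector of `φ_A⁻¹ ∘ G_B`, with eigenvalue `c_γ`, say. Nondegeneracy of `G_B` on `W^∨` then
gives `γ^∨_B = γ^∨ / c_γ`. As `φ_A⁻¹ ∘ G_B` is `G_A`-symmetric, eigenvectors with different
eigenvalues are `G_A`-orthogonal, so in the `∨`-sum of `B` over a plane through `α` only the terms
with `c_β = c_α` survive, and it becomes `c_α⁻²` times the `∨`-sum of `A` over that plane.
-/

open scoped Classical

open Module Submodule

section SpanPair

variable {K M N : Type*} [DivisionRing K] [AddCommGroup M] [Module K M] [AddCommGroup N]
  [Module K N]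

theorem span_pair_eq_of_mem_of_notMem {γ β x : M} (hx : x ∈ span K {γ, β})
    (hxγ : x ∉ K ∙ γ) : span K {γ, x} = span K {γ, β} := by
  refine le_antisymm (span_le.2 (Set.insert_subset (subset_span (Set.mem_insert _ _))
    (Set.singleton_subset_iff.2 hx))) (span_le.2 (Set.insert_subset
      (subset_span (Set.mem_insert _ _)) (Set.singleton_subset_iff.2 ?_)))
  rw [Set.pair_comm] at hx ⊢
  exact mem_span_insert_exchange hx hxγ

theorem finrank_span_pair_eq_two {γ β : M} (hγ : γ ≠ 0) (hβ : β ∉ K ∙ γ) :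
    finrank K (span K {γ, β}) = 2 := by
  have hind : LinearIndependent K ![γ, β] :=
    (LinearIndependent.pair_iff' hγ).2 fun a ha => hβ (mem_span_singleton.2 ⟨a, ha⟩)
  rw [← Matrix.range_cons_cons_empty, finrank_span_eq_card hind, Fintype.card_fin]

theorem Finset.sum_mem_of_sum_filter_span_pair_mem {s : Finset M} {f : M → N} {γ : M}
    {L : Submodule K N} (hline : ∑ x ∈ s.filter (· ∈ K ∙ γ), f x ∈ L)
    (hplane : ∀ β ∈ s, β ∉ K ∙ γ → ∑ x ∈ s.filter (· ∈ span K {γ, β}), f x ∈ L) :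
    ∑ x ∈ s, f x ∈ L := by
  rw [← s.sum_filter_add_sum_filter_not (· ∈ K ∙ γ)]
  refine L.add_mem hline ?_
  let plane : M → Submodule K M := fun β => span K {γ, β}
  rw [← Finset.sum_fiberwise_of_maps_to (g := plane)
    fun β hβ => Finset.mem_image_of_mem plane hβ]
  refine L.sum_mem fun σ hσ => ?_
  obtain ⟨β, hβ, rfl⟩ := Finset.mem_image.1 hσ
  rw [Finset.mem_filter] at hβ
  have hγ : γ ∈ plane β := subset_span (Set.mem_insert _ _)
  have hline_sub : s.filter (· ∈ K ∙ γ) ⊆ s.filter (· ∈ plane β) :=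
    Finset.monotone_filter_right s fun _ _ hx => (span_singleton_le_iff_mem γ _).2 hγ hx
  have hfiber : (s.filter (· ∉ K ∙ γ)).filter (plane · = plane β) =
      s.filter (· ∈ plane β) \ s.filter (· ∈ K ∙ γ) := by
    ext x
    simp only [Finset.mem_filter, Finset.mem_sdiff, not_and]
    constructor
    · rintro ⟨⟨hxs, hxγ⟩, hx⟩
      exact ⟨⟨hxs, hx ▸ subset_span (Set.mem_insert_of_mem _ rfl)⟩, fun _ => hxγ⟩
    · rintro ⟨⟨hxs, hx⟩, hxγ⟩
      exact ⟨⟨hxs, hxγ hxs⟩, span_pair_eq_of_mem_of_notMem hx (hxγ hxs)⟩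
  rw [hfiber, Finset.sum_sdiff_eq_sub hline_sub]
  exact L.sub_mem (hplane β hβ.1 hβ.2) hline

end SpanPair

theorem Finset.filter_mem_filter_mem_of_le {M K : Type*} [Semiring K] [AddCommMonoid M]
    [Module K M] {p q : Submodule K M} (h : p ≤ q) (s : Finset M) :
    (s.filter (· ∈ q)).filter (· ∈ p) = s.filter (· ∈ p) := by
  rw [Finset.filter_filter]
  exact Finset.filter_congr fun x _ => and_iff_right_of_imp fun hx => h hx

section VeeSystem

variable {K V : Type*} [Field K] [AddCommGroup V] [Module K V]

def canonicalForm (S : Finset (Dual K V)) : LinearMap.BilinForm K V :=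
  ∑ β ∈ S, (LinearMap.mul K K).compl₁₂ β β

theorem canonicalForm_apply (S : Finset (Dual K V)) (x : V) :
    canonicalForm S x = ∑ β ∈ S, β x • β := by
  ext y
  simp [canonicalForm]

theorem canonicalForm_apply_apply (S : Finset (Dual K V)) (x y : V) :
    canonicalForm S x y = ∑ β ∈ S, β x * β y := by
  simp [canonicalForm_apply]

theorem canonicalForm_comm (S : Finset (Dual K V)) (x y : V) :
    canonicalForm S x y = canonicalForm S y x := by
  simp only [canonicalForm_apply_apply, mul_comm]

/-- `A` satisfies the `∨`-condition on the planes of `W`, with `α^∨ = vee α`; for `W = ⊤` and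
`vee = φ_A⁻¹` this says that `A` is a `∨`-system. -/
def IsVeeSystemIn (A : Finset (Dual K V)) (vee : Dual K V → V)
    (W : Submodule K (Dual K V)) : Prop :=
  ∀ α ∈ A, ∀ π : Submodule K (Dual K V), finrank K π = 2 → π ≤ W → α ∈ π →
    ∃ lam : K, ∑ β ∈ A.filter (· ∈ π), β (vee α) • vee β = lam • vee α

variable (φ : V ≃ₗ[K] Dual K V)

theorem apply_symm_comm (hφ : ∀ x y, φ x y = φ y x) (α β : Dual K V) :
    α (φ.symm β) = β (φ.symm α) := by
  simpa using hφ (φ.symm α) (φ.symm β)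

theorem sum_apply_smul_symm_eq_smul_iff (S : Finset (Dual K V)) (α : Dual K V) (c : K) :
    ∑ β ∈ S, β (φ.symm α) • φ.symm β = c • φ.symm α ↔ canonicalForm S (φ.symm α) = c • α := by
  rw [← φ.injective.eq_iff, canonicalForm_apply]
  simp

theorem IsVeeSystemIn.canonicalForm_symm_mem_span {A : Finset (Dual K V)}
    {W : Submodule K (Dual K V)} (hA : IsVeeSystemIn A φ.symm W) {γ : Dual K V}
    (hγ : γ ∈ A.filter (· ∈ W)) : canonicalForm (A.filter (· ∈ W)) (φ.symm γ) ∈ K ∙ γ := by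
  obtain rfl | hγ0 := eq_or_ne γ 0
  · simp
  rw [Finset.mem_filter] at hγ
  rw [canonicalForm_apply]
  refine Finset.sum_mem_of_sum_filter_span_pair_mem (γ := γ) ?_ fun β hβ hβγ => ?_
  · exact sum_mem fun β hβ => smul_mem _ _ (Finset.mem_filter.1 hβ).2
  · have hσW : span K {γ, β} ≤ W :=
      span_le.2 (Set.insert_subset hγ.2 (Set.singleton_subset_iff.2 (Finset.mem_filter.1 hβ).2))
    obtain ⟨lam, hlam⟩ := hA γ hγ.1 _ (finrank_span_pair_eq_two hγ0 hβγ) hσW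
      (subset_span (Set.mem_insert _ _))
    rw [sum_apply_smul_symm_eq_smul_iff, canonicalForm_apply] at hlam
    rw [Finset.filter_mem_filter_mem_of_le hσW, hlam]
    exact smul_mem _ _ (mem_span_singleton_self γ)

section Nondegenerate

variable {B : Finset (Dual K V)} {U : Submodule K V}

theorem eq_of_forall_canonicalForm_eq
    (hnd : ∀ x ∈ U, (∀ y ∈ U, canonicalForm B x y = 0) → x = 0) {x x' : V} (hx : x ∈ U)
    (hx' : x' ∈ U) (h : ∀ y ∈ U, canonicalForm B x y = canonicalForm B x' y) : x = x' :=
  sub_eq_zero.1 <| hnd _ (U.sub_mem hx hx') fun y hy => by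
    rw [LinearMap.map_sub₂, h y hy, sub_self]

theorem exists_canonicalForm_eq_smul_and_vee_eq
    (hnd : ∀ x ∈ U, (∀ y ∈ U, canonicalForm B x y = 0) → x = 0) {vee : Dual K V → V}
    {γ : Dual K V} (hγU : φ.symm γ ∈ U)
    (hvee : vee γ ∈ U ∧ ∀ y ∈ U, canonicalForm B (vee γ) y = γ y)
    (hγ : canonicalForm B (φ.symm γ) ∈ K ∙ γ) :
    ∃ c : K, canonicalForm B (φ.symm γ) = c • γ ∧ vee γ = c⁻¹ • φ.symm γ := by
  obtain ⟨c, hc⟩ := mem_span_singleton.1 hγ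
  obtain rfl | hγ0 := eq_or_ne γ 0
  · refine ⟨1, by simp, ?_⟩
    simpa using hnd _ hvee.1 fun y hy => by simp [hvee.2 y hy]
  have hc0 : c ≠ 0 := by
    rintro rfl
    refine hγ0 (φ.symm.injective ?_)
    simpa using hnd _ hγU fun y _ => by simp [← hc]
  refine ⟨c, hc.symm, eq_of_forall_canonicalForm_eq hnd hvee.1 (U.smul_mem _ hγU)
    fun y hy => ?_⟩
  rw [hvee.2 y hy, LinearMap.map_smul₂, ← hc]
  simp [hc0]

theorem apply_symm_eq_zero_of_eigenvalue_ne (hφ : ∀ x y, φ x y = φ y x) {α β : Dual K V}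
    {a b : K} (hα : canonicalForm B (φ.symm α) = a • α)
    (hβ : canonicalForm B (φ.symm β) = b • β) (hab : a ≠ b) : β (φ.symm α) = 0 := by
  have h : a * α (φ.symm β) = b * β (φ.symm α) := by
    simpa [hα, hβ] using canonicalForm_comm B (φ.symm α) (φ.symm β)
  rw [apply_symm_comm φ hφ] at h
  exact (mul_eq_zero.1 (sub_mul a b _ ▸ sub_eq_zero.2 h)).resolve_left (sub_ne_zero.2 hab)

end Nondegenerate

theorem IsVeeSystemIn.filter_of_nondegenerate (hφ : ∀ x y, φ x y = φ y x) {A : Finset (Dual K V)}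
    {W : Submodule K (Dual K V)} (hA : IsVeeSystemIn A φ.symm W) {vee : Dual K V → V}
    (hnd : ∀ x ∈ W.comap (φ : V →ₗ[K] Dual K V), (∀ y ∈ W.comap (φ : V →ₗ[K] Dual K V),
      canonicalForm (A.filter (· ∈ W)) x y = 0) → x = 0)
    (hvee : ∀ β ∈ A.filter (· ∈ W), vee β ∈ W.comap (φ : V →ₗ[K] Dual K V) ∧
      ∀ y ∈ W.comap (φ : V →ₗ[K] Dual K V), canonicalForm (A.filter (· ∈ W)) (vee β) y = β y) :
    IsVeeSystemIn (A.filter (· ∈ W)) vee W := by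
  have heigen : ∀ β ∈ A.filter (· ∈ W), ∃ c : K,
      canonicalForm (A.filter (· ∈ W)) (φ.symm β) = c • β ∧ vee β = c⁻¹ • φ.symm β :=
    fun β hβ => exists_canonicalForm_eq_smul_and_vee_eq φ hnd
      (by simpa using (Finset.mem_filter.1 hβ).2) (hvee β hβ)
      (hA.canonicalForm_symm_mem_span φ hβ)
  intro α hα π hπ2 hπW hαπ
  obtain ⟨c, hcα, hvα⟩ := heigen α hα
  obtain ⟨lam, hlam⟩ := hA α (Finset.mem_filter.1 hα).1 π hπ2 hπW hαπ
  -- terms with `d ≠ c` vanish by orthogonality, so every `vee β` may be taken as `φ⁻¹ β / c`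
  have hterm : ∀ β ∈ (A.filter (· ∈ W)).filter (· ∈ π),
      β (vee α) • vee β = (c⁻¹ * c⁻¹) • (β (φ.symm α) • φ.symm β) := by
    intro β hβ
    obtain ⟨d, hdβ, hvβ⟩ := heigen β (Finset.mem_filter.1 hβ).1
    rw [hvα, hvβ, map_smul, smul_eq_mul, smul_smul, smul_smul]
    obtain rfl | hcd := eq_or_ne c d
    · ring_nf
    · simp [apply_symm_eq_zero_of_eigenvalue_ne φ hφ hcα hdβ hcd]
  refine ⟨c⁻¹ * lam, ?_⟩
  rw [Finset.sum_congr rfl hterm, ← Finset.smul_sum, Finset.filter_mem_filter_mem_of_le hπW, hlam,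
    hvα, smul_smul, smul_smul]
  ring_nf

end VeeSystem

theorem subsystem_is_vee_system_general
    {V : Type*} [AddCommGroup V] [Module ℂ V]
    (A : Finset (Module.Dual ℂ V))
    (φ : V ≃ₗ[ℂ] Module.Dual ℂ V)
    (hφ : ∀ x y, φ x y = ∑ α ∈ A, α x * α y)
    -- A is a ∨-system:
    (hA : ∀ α ∈ A, ∀ π : Submodule ℂ (Module.Dual ℂ V),
      Module.finrank ℂ π = 2 → α ∈ π → ∃ lam : ℂ,
        ∑ β ∈ A.filter (· ∈ π), β (φ.symm α) • φ.symm β = lam • φ.symm α)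
    (W : Submodule ℂ (Module.Dual ℂ V))
    (B : Finset (Module.Dual ℂ V)) (hB : B = A.filter (· ∈ W))
    -- G_B restricted to W^∨ is nondegenerate:
    (hnd : ∀ x ∈ Submodule.comap (φ : V →ₗ[ℂ] Module.Dual ℂ V) W,
      (∀ y ∈ Submodule.comap (φ : V →ₗ[ℂ] Module.Dual ℂ V) W,
        ∑ β ∈ B, β x * β y = 0) → x = 0)
    -- duals with respect to G_B restricted to W^∨:
    (veeB : Module.Dual ℂ V → V)
    (hveeB : ∀ β ∈ B, veeB β ∈ Submodule.comap (φ : V →ₗ[ℂ] Module.Dual ℂ V) W ∧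
      ∀ y ∈ Submodule.comap (φ : V →ₗ[ℂ] Module.Dual ℂ V) W,
        ∑ γ ∈ B, γ (veeB β) * γ y = β y) :
    -- B is a ∨-system in W:
    ∀ α ∈ B, ∀ π : Submodule ℂ (Module.Dual ℂ V),
      Module.finrank ℂ π = 2 → π ≤ W → α ∈ π → ∃ lam : ℂ,
        ∑ β ∈ B.filter (· ∈ π), β (veeB α) • veeB β = lam • veeB α := by
  subst hB
  have hφ_comm : ∀ x y, φ x y = φ y x := fun x y => by simp only [hφ, mul_comm]
  have hAW : IsVeeSystemIn A φ.symm W := fun α hα π hπ2 _ => hA α hα π hπ2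
  simp only [← canonicalForm_apply_apply] at hnd hveeB
  exact hAW.filter_of_nondegenerate φ hφ_comm hnd hveeB

/-- Theorem 2 of the paper: Any non-isotropic subsystem `B = A ∩ W` of a
`∨`-system `A` (with nondegenerate canonical form `G_A`, inducing `φ : V ≃ V*` and
`α^∨ = φ⁻¹ α`, and with `W` spanned by `B`) is itself a `∨`-system in `W`, the duals `β^∨_B`
being taken with respect to the restriction of `G_B` to `W^∨`, assumed nondegenerate. -/
theorem subsystem_is_vee_system
    {V : Type*} [AddCommGroup V] [Module ℂ V] [FiniteDimensional ℂ V]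
    (A : Finset (Module.Dual ℂ V))
    (φ : V ≃ₗ[ℂ] Module.Dual ℂ V)
    (hφ : ∀ x y, φ x y = ∑ α ∈ A, α x * α y)
    -- A is a ∨-system:
    (hA : ∀ α ∈ A, ∀ π : Submodule ℂ (Module.Dual ℂ V),
      Module.finrank ℂ π = 2 → α ∈ π → ∃ lam : ℂ,
        ∑ β ∈ A.filter (· ∈ π), β (φ.symm α) • φ.symm β = lam • φ.symm α)
    (W : Submodule ℂ (Module.Dual ℂ V))
    (B : Finset (Module.Dual ℂ V)) (hB : B = A.filter (· ∈ W))
    (hspan : Submodule.span ℂ (B : Set (Module.Dual ℂ V)) = W)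
    -- G_B restricted to W^∨ is nondegenerate:
    (hnd : ∀ x ∈ Submodule.comap (φ : V →ₗ[ℂ] Module.Dual ℂ V) W,
      (∀ y ∈ Submodule.comap (φ : V →ₗ[ℂ] Module.Dual ℂ V) W,
        ∑ β ∈ B, β x * β y = 0) → x = 0)
    -- duals with respect to G_B restricted to W^∨:
    (veeB : Module.Dual ℂ V → V)
    (hveeB : ∀ β ∈ B, veeB β ∈ Submodule.comap (φ : V →ₗ[ℂ] Module.Dual ℂ V) W ∧
      ∀ y ∈ Submodule.comap (φ : V →ₗ[ℂ] Module.Dual ℂ V) W,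
        ∑ γ ∈ B, γ (veeB β) * γ y = β y) :
    -- B is a ∨-system in W:
    ∀ α ∈ B, ∀ π : Submodule ℂ (Module.Dual ℂ V),
      Module.finrank ℂ π = 2 → π ≤ W → α ∈ π → ∃ lam : ℂ,
        ∑ β ∈ B.filter (· ∈ π), β (veeB α) • veeB β = lam • veeB α :=
  subsystem_is_vee_system_general A φ hφ hA W B hB hnd veeB hveeB
end

section
/- Let A be a V-system in a finite-dimensional complex vector space (with nondegenerate canonical form G_A), and B = A ∩ W for a subspace W spanned by B. Then either the restrictions of G_B and G_A to W^∨ × V are proportional, or B decomposes as a disjoint union B_1 ⊔ B_2 of two nonempty subsets with G_A(β_1^∨, β_2^∨) = 0 for all β_1 ∈ B_1, β_2 ∈ B_2. -/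
open scoped Classical

private lemma finrank_pair {V : Type*} [AddCommGroup V] [Module ℂ V] (β γ : V)
    (h : LinearIndependent ℂ ![β, γ]) :
    Module.finrank ℂ (Submodule.span ℂ {β, γ}) = 2 := by
  have h1 : Set.range ![β, γ] = {β, γ} := by
    ext z; simp [Matrix.range_cons, Matrix.range_empty, or_comm]
  rw [← h1, finrank_span_eq_card h]; simp

private lemma eigen_mem {V : Type*} [AddCommGroup V] [Module ℂ V] [FiniteDimensional ℂ V]
    (A : Finset (Module.Dual ℂ V)) (φ : V ≃ₗ[ℂ] Module.Dual ℂ V)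
    (hA : ∀ α ∈ A, ∀ π : Submodule ℂ (Module.Dual ℂ V),
      Module.finrank ℂ π = 2 → α ∈ π → ∃ lam : ℂ,
        ∑ β ∈ A.filter (· ∈ π), β (φ.symm α) • φ.symm β = lam • φ.symm α)
    (W : Submodule ℂ (Module.Dual ℂ V))
    (B : Finset (Module.Dual ℂ V)) (hB : B = A.filter (· ∈ W))
    (hW : ∀ γ ∈ B, γ ∈ W)
    (β : Module.Dual ℂ V) (hβ : β ∈ B) :
    ∑ γ ∈ B, γ (φ.symm β) • φ.symm γ ∈ Submodule.span ℂ {φ.symm β} := by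
  classical
  by_cases hβ0 : β = 0
  · subst hβ0; simp
  set x := φ.symm β with hx
  have hxspan : x ∈ Submodule.span ℂ {x} := Submodule.mem_span_singleton_self x
  have hmem : ∀ δ : Module.Dual ℂ V, δ ∈ B ↔ δ ∈ A ∧ δ ∈ W := by
    intro δ; rw [hB]; simp [Finset.mem_filter]
  have hβA : β ∈ A := ((hmem β).mp hβ).1
  have hβW : β ∈ W := hW β hβ
  have hcol : ∀ (s : Finset (Module.Dual ℂ V)),
      (∀ γ ∈ s, ∃ c : ℂ, γ = c • β) →
      ∑ γ ∈ s, γ x • φ.symm γ ∈ Submodule.span ℂ {x} := by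
    intro s hs
    refine Submodule.sum_mem _ fun γ hγ => ?_
    obtain ⟨c, rfl⟩ := hs γ hγ
    rw [map_smul]
    exact Submodule.smul_mem _ _ (Submodule.smul_mem _ _ hxspan)
  rw [← Finset.sum_filter_add_sum_filter_not B (fun γ => ∃ c : ℂ, γ = c • β)]
  refine Submodule.add_mem _ (hcol _ fun γ hγ => (Finset.mem_filter.mp hγ).2) ?_
  set D := B.filter (fun γ => ¬ ∃ c : ℂ, γ = c • β) with hD
  set P : Module.Dual ℂ V → Submodule ℂ (Module.Dual ℂ V) :=
    fun γ => Submodule.span ℂ {β, γ} with hP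
  rw [← Finset.sum_fiberwise_of_maps_to
    (fun γ hγ => Finset.mem_image_of_mem P hγ : ∀ γ ∈ D, P γ ∈ D.image P)
    (fun γ => γ x • φ.symm γ)]
  refine Submodule.sum_mem _ fun π hπ => ?_
  obtain ⟨γ₀, hγ₀D, rfl⟩ := Finset.mem_image.mp hπ
  have hγ₀ : γ₀ ∈ B := (Finset.mem_filter.mp hγ₀D).1
  have hγ₀n : ¬ ∃ c : ℂ, γ₀ = c • β := (Finset.mem_filter.mp hγ₀D).2
  have hind : LinearIndependent ℂ ![β, γ₀] :=
    (LinearIndependent.pair_iff' hβ0).mpr (fun a ha => hγ₀n ⟨a, ha.symm⟩)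
  have hfin : Module.finrank ℂ (P γ₀) = 2 := finrank_pair β γ₀ hind
  have hπW : P γ₀ ≤ W := by
    rw [hP]
    refine Submodule.span_le.mpr ?_
    rintro z hz
    rcases hz with rfl | hz
    · exact hβW
    · rw [Set.mem_singleton_iff] at hz; rw [hz]; exact hW γ₀ hγ₀
  have hβπ : β ∈ P γ₀ := Submodule.subset_span (Set.mem_insert _ _)
  obtain ⟨lam, hlam⟩ := hA β hβA (P γ₀) hfin hβπ
  have hsplit : A.filter (· ∈ P γ₀) =
      (D.filter fun γ => P γ = P γ₀) ∪ (B.filter fun γ => ∃ c : ℂ, γ = c • β) := by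
    ext δ
    simp only [hD, Finset.mem_union, Finset.mem_filter]
    constructor
    · rintro ⟨hδA, hδπ⟩
      by_cases hc : ∃ c : ℂ, δ = c • β
      · exact Or.inr ⟨(hmem δ).mpr ⟨hδA, hπW hδπ⟩, hc⟩
      · refine Or.inl ⟨⟨(hmem δ).mpr ⟨hδA, hπW hδπ⟩, hc⟩, ?_⟩
        have hindδ : LinearIndependent ℂ ![β, δ] :=
          (LinearIndependent.pair_iff' hβ0).mpr (fun a ha => hc ⟨a, ha.symm⟩)
        have hle : P δ ≤ P γ₀ := by
          rw [hP]
          refine Submodule.span_le.mpr ?_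
          rintro z hz
          rcases hz with rfl | hz
          · exact hβπ
          · rw [Set.mem_singleton_iff] at hz; rw [hz]; exact hδπ
        exact Submodule.eq_of_le_of_finrank_le hle
          (by rw [hfin, finrank_pair β δ hindδ])
    · rintro (⟨⟨hδB, -⟩, hPδ⟩ | ⟨hδB, c, rfl⟩)
      · refine ⟨((hmem δ).mp hδB).1, ?_⟩
        rw [← hPδ]
        exact Submodule.subset_span (Set.mem_insert_iff.mpr (Or.inr rfl))
      · exact ⟨((hmem _).mp hδB).1, Submodule.smul_mem _ _ hβπ⟩
  have hdisj : Disjoint (D.filter fun γ => P γ = P γ₀)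
      (B.filter fun γ => ∃ c : ℂ, γ = c • β) := by
    refine Finset.disjoint_left.mpr fun γ hγ1 hγ2 => ?_
    exact (Finset.mem_filter.mp (Finset.mem_filter.mp hγ1).1).2 (Finset.mem_filter.mp hγ2).2
  rw [hsplit, Finset.sum_union hdisj] at hlam
  rw [eq_sub_of_add_eq hlam]
  exact Submodule.sub_mem _ (Submodule.smul_mem _ _ hxspan)
    (hcol _ fun γ hγ => (Finset.mem_filter.mp hγ).2)


/-- Theorem 3 of the paper: For any subsystem `B = A ∩ W` of a `∨`-system
`A` (with `W` spanned by `B`), either the restrictions of `G_B` and `G_A` to `W^∨ × V` are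
proportional, or `B` splits as a disjoint union `B₁ ⊔ B₂` of two nonempty parts with
`G_A(β₁^∨, β₂^∨) = 0` for all `β₁ ∈ B₁`, `β₂ ∈ B₂`. -/
theorem subsystem_proportional_or_reducible
    {V : Type*} [AddCommGroup V] [Module ℂ V] [FiniteDimensional ℂ V]
    (A : Finset (Module.Dual ℂ V))
    (φ : V ≃ₗ[ℂ] Module.Dual ℂ V)
    (hφ : ∀ x y, φ x y = ∑ α ∈ A, α x * α y)
    -- A is a ∨-system:
    (hA : ∀ α ∈ A, ∀ π : Submodule ℂ (Module.Dual ℂ V),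
      Module.finrank ℂ π = 2 → α ∈ π → ∃ lam : ℂ,
        ∑ β ∈ A.filter (· ∈ π), β (φ.symm α) • φ.symm β = lam • φ.symm α)
    (W : Submodule ℂ (Module.Dual ℂ V))
    (B : Finset (Module.Dual ℂ V)) (hB : B = A.filter (· ∈ W))
    (hspan : Submodule.span ℂ (B : Set (Module.Dual ℂ V)) = W) :
    (∃ c : ℂ, ∀ x ∈ Submodule.comap (φ : V →ₗ[ℂ] Module.Dual ℂ V) W, ∀ y : V,
        ∑ β ∈ B, β x * β y = c * ∑ α ∈ A, α x * α y) ∨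
    (∃ B₁ B₂ : Finset (Module.Dual ℂ V),
        B₁ ∪ B₂ = B ∧ Disjoint B₁ B₂ ∧ B₁.Nonempty ∧ B₂.Nonempty ∧
        ∀ β₁ ∈ B₁, ∀ β₂ ∈ B₂,
          ∑ α ∈ A, α (φ.symm β₁) * α (φ.symm β₂) = 0) := by
  classical
  have hW : ∀ γ ∈ B, γ ∈ W := fun γ hγ => hspan ▸ Submodule.subset_span (Finset.mem_coe.mpr hγ)
  have key : ∀ β ∈ B, ∃ μ : ℂ, ∑ γ ∈ B, γ (φ.symm β) • φ.symm γ = μ • φ.symm β := by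
    intro β hβ
    obtain ⟨μ, hμ⟩ := Submodule.mem_span_singleton.mp (eigen_mem A φ hA W B hB hW β hβ)
    exact ⟨μ, hμ.symm⟩
  have happ : ∀ (u v : Module.Dual ℂ V) (m : ℂ),
      (∑ γ ∈ B, γ (φ.symm u) • φ.symm γ = m • φ.symm u) →
      ∑ γ ∈ B, γ (φ.symm u) * γ (φ.symm v) = m * u (φ.symm v) := by
    intro u v m hm
    calc ∑ γ ∈ B, γ (φ.symm u) * γ (φ.symm v)
        = φ (∑ γ ∈ B, γ (φ.symm u) • φ.symm γ) (φ.symm v) := by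
          rw [map_sum, LinearMap.sum_apply]
          exact (Finset.sum_congr rfl fun γ _ => by
            rw [map_smul, LinearMap.smul_apply, LinearEquiv.apply_symm_apply, smul_eq_mul]).symm
      _ = m * u (φ.symm v) := by
          rw [hm, map_smul, LinearMap.smul_apply, LinearEquiv.apply_symm_apply, smul_eq_mul]
  have hsym : ∀ u v : Module.Dual ℂ V, u (φ.symm v) = v (φ.symm u) := by
    intro u v
    calc u (φ.symm v) = ∑ α ∈ A, α (φ.symm u) * α (φ.symm v) := by
          rw [← hφ, LinearEquiv.apply_symm_apply]
      _ = ∑ α ∈ A, α (φ.symm v) * α (φ.symm u) :=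
          Finset.sum_congr rfl fun α _ => mul_comm _ _
      _ = v (φ.symm u) := by rw [← hφ, LinearEquiv.apply_symm_apply]
  by_cases hc : ∃ c : ℂ, ∀ β ∈ B, ∑ γ ∈ B, γ (φ.symm β) • φ.symm γ = c • φ.symm β
  · obtain ⟨c, hc⟩ := hc
    left
    refine ⟨c, fun x hx y => ?_⟩
    have hx' : φ x ∈ Submodule.span ℂ (B : Set (Module.Dual ℂ V)) := by rw [hspan]; exact hx
    have main : ∀ w ∈ Submodule.span ℂ (B : Set (Module.Dual ℂ V)),
        ∑ γ ∈ B, γ (φ.symm w) • φ.symm γ = c • φ.symm w := by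
      intro w hw
      induction hw using Submodule.span_induction with
      | mem z hz => exact hc z (Finset.mem_coe.mp hz)
      | zero => simp
      | add u v hu hv ihu ihv =>
          have h1 : ∀ γ : Module.Dual ℂ V, γ (φ.symm (u + v)) • φ.symm γ
              = γ (φ.symm u) • φ.symm γ + γ (φ.symm v) • φ.symm γ := by
            intro γ; rw [map_add, map_add, add_smul]
          rw [Finset.sum_congr rfl fun γ _ => h1 γ, Finset.sum_add_distrib, ihu, ihv,
            map_add, smul_add]
      | smul a u hu ih =>
          have h1 : ∀ γ : Module.Dual ℂ V, γ (φ.symm (a • u)) • φ.symm γ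
              = a • (γ (φ.symm u) • φ.symm γ) := by
            intro γ; rw [map_smul, map_smul, smul_eq_mul, mul_smul]
          rw [Finset.sum_congr rfl fun γ _ => h1 γ, ← Finset.smul_sum, ih, map_smul,
            smul_smul, smul_smul, mul_comm]
    have hLx : ∑ γ ∈ B, γ x • φ.symm γ = c • x := by
      have h2 := main (φ x) hx'
      rwa [LinearEquiv.symm_apply_apply] at h2
    calc ∑ β ∈ B, β x * β y
        = φ (∑ γ ∈ B, γ x • φ.symm γ) y := by
          rw [map_sum, LinearMap.sum_apply]
          exact (Finset.sum_congr rfl fun γ _ => by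
            rw [map_smul, LinearMap.smul_apply, LinearEquiv.apply_symm_apply, smul_eq_mul]).symm
      _ = c * ∑ α ∈ A, α x * α y := by
          rw [hLx, map_smul, LinearMap.smul_apply, smul_eq_mul, hφ]
  · right
    push_neg at hc
    have hBne : B.Nonempty := by
      by_contra h
      rw [Finset.not_nonempty_iff_eq_empty] at h
      obtain ⟨β, hβ, -⟩ := hc 0
      simp [h] at hβ
    obtain ⟨β₀, hβ₀⟩ := hBne
    obtain ⟨c₀, hc₀⟩ := key β₀ hβ₀
    refine ⟨B.filter (fun β => ∑ γ ∈ B, γ (φ.symm β) • φ.symm γ = c₀ • φ.symm β),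
      B.filter (fun β => ¬ (∑ γ ∈ B, γ (φ.symm β) • φ.symm γ = c₀ • φ.symm β)),
      Finset.filter_union_filter_not_eq _ B, Finset.disjoint_filter_filter_not B B _,
      ⟨β₀, Finset.mem_filter.mpr ⟨hβ₀, hc₀⟩⟩, ?_, ?_⟩
    · obtain ⟨β, hβ, hne⟩ := hc c₀
      exact ⟨β, Finset.mem_filter.mpr ⟨hβ, hne⟩⟩
    · intro β₁ h1 β₂ h2
      obtain ⟨hβ₁B, he₁⟩ := Finset.mem_filter.mp h1
      obtain ⟨hβ₂B, he₂⟩ := Finset.mem_filter.mp h2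
      obtain ⟨ν, hν⟩ := key β₂ hβ₂B
      have hν0 : ν ≠ c₀ := by rintro rfl; exact he₂ hν
      have e1 := happ β₁ β₂ c₀ he₁
      have e2 := happ β₂ β₁ ν hν
      have e3 : ∑ γ ∈ B, γ (φ.symm β₁) * γ (φ.symm β₂)
          = ∑ γ ∈ B, γ (φ.symm β₂) * γ (φ.symm β₁) :=
        Finset.sum_congr rfl fun γ _ => mul_comm _ _
      have e4 : c₀ * β₁ (φ.symm β₂) = ν * β₁ (φ.symm β₂) := by
        rw [← e1, e3, e2, hsym β₂ β₁]
      have e5 : β₁ (φ.symm β₂) = 0 := by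
        by_contra h
        exact hν0 (mul_right_cancel₀ h e4).symm
      calc ∑ α ∈ A, α (φ.symm β₁) * α (φ.symm β₂)
          = β₁ (φ.symm β₂) := by rw [← hφ, LinearEquiv.apply_symm_apply]
        _ = 0 := e5
end

section
/- Let A ⊂ V* be a V-system in a finite-dimensional complex vector space V with nondegenerate canonical form. Then for every α ∈ A, every 2-plane π ⊂ V* containing α, and all a, b ∈ V: Σ_{β∈π∩A} β(α^∨)(α(a)β(b) − α(b)β(a)) = 0. -/
open scoped Classical

/-- If `A` is a `∨`-system (with nondegenerate canonical form inducing
`φ : V ≃ V*`, `α^∨ = φ⁻¹ α`), then for every `α ∈ A`, every 2-plane `π ∋ α` and all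
`a, b ∈ V`: `∑ β ∈ π∩A, β(α^∨)(α(a)β(b) − α(b)β(a)) = 0`. -/
theorem prepotential_identity_of_vee_system
    {V : Type*} [AddCommGroup V] [Module ℂ V] [FiniteDimensional ℂ V]
    (A : Finset (Module.Dual ℂ V))
    (φ : V ≃ₗ[ℂ] Module.Dual ℂ V)
    (hφ : ∀ x y, φ x y = ∑ α ∈ A, α x * α y)
    (hA : ∀ α ∈ A, ∀ π : Submodule ℂ (Module.Dual ℂ V),
      Module.finrank ℂ π = 2 → α ∈ π → ∃ lam : ℂ,
        ∑ β ∈ A.filter (· ∈ π), β (φ.symm α) • φ.symm β = lam • φ.symm α) :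
    ∀ α ∈ A, ∀ π : Submodule ℂ (Module.Dual ℂ V),
      Module.finrank ℂ π = 2 → α ∈ π → ∀ a b : V,
        ∑ β ∈ A.filter (· ∈ π), β (φ.symm α) * (α a * β b - α b * β a) = 0 := by
  intro α hα π hπ hαπ a b
  obtain ⟨lam, hlam⟩ := hA α hα π hπ hαπ
  have key : ∀ x : V, ∑ β ∈ A.filter (· ∈ π), β (φ.symm α) * β x = lam * α x := by
    intro x
    have := congrArg (fun v => φ v x) hlam
    simpa [map_sum, map_smul, Finset.sum_apply, smul_eq_mul] using this
  have h : ∑ β ∈ A.filter (· ∈ π), β (φ.symm α) * (α a * β b - α b * β a)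
      = α a * (∑ β ∈ A.filter (· ∈ π), β (φ.symm α) * β b)
        - α b * (∑ β ∈ A.filter (· ∈ π), β (φ.symm α) * β a) := by
    rw [Finset.mul_sum, Finset.mul_sum, ← Finset.sum_sub_distrib]
    apply Finset.sum_congr rfl
    intro β _
    ring
  rw [h, key a, key b]
  ring
end
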